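/- (Theorem 5: FDR control of the oracle Gen-GBH) Suppose that for each s = 1,…,S, positive deterministic weights W_1(s),…,W_N(s) satisfy Condition 1, i.e. Σ_{i ∈ I^0} 1/W_i(s) = N, and define combined weights W_i by 1/W_i = (1/S)·Σ_{s=1}^S 1/W_i(s). Under Assumptions 1 and 2, the level-α weighted BH procedure applied to the weighted p-values W_i·P_i has FDR ≤ α. -/

import Mathlib

open MeasureTheory ProbabilityTheory Finset

/-- Number of rejections of the (weighted) BH step-up procedure at level `α`,
applied to the (weighted) p-values `Q`: the largest `j ≤ N` such that at least `j`
of the values `Q i` are `≤ j*α/N` (this is `0`, i.e. no rejections, when no such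
`j ≥ 1` exists). -/
noncomputable def bhNumRejections (N : ℕ) (α : ℝ) (Q : Fin N → ℝ) : ℕ :=
  ((Finset.range (N + 1)).filter
      (fun j : ℕ => j ≤ (Finset.univ.filter (fun i : Fin N => Q i ≤ (j : ℝ) * α / N)).card)).sup id

/-- The set of indices rejected by the level-`α` BH procedure applied to `Q`. -/
noncomputable def bhRejected (N : ℕ) (α : ℝ) (Q : Fin N → ℝ) : Finset (Fin N) :=
  Finset.univ.filter (fun i => Q i ≤ (bhNumRejections N α Q : ℝ) * α / N)

/-- False discovery proportion `V / max(R,1)` of the level-`α` BH procedure. -/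
noncomputable def FDP (N : ℕ) (α : ℝ) (I0 : Finset (Fin N)) (Q : Fin N → ℝ) : ℝ :=
  ((bhRejected N α Q ∩ I0).card : ℝ) / max ((bhRejected N α Q).card : ℝ) 1

/-- False discovery rate `E[V / max(R,1)]` of the level-`α` BH procedure applied to
the (random, possibly weighted) p-values `Q ω`. -/
noncomputable def FDR {Ω : Type*} [MeasurableSpace Ω] (μ : Measure Ω)
    (N : ℕ) (α : ℝ) (I0 : Finset (Fin N)) (Q : Ω → Fin N → ℝ) : ℝ :=
  ∫ ω, FDP N α I0 (Q ω) ∂μ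

/-- Assumption 1: each null p-value is Uniform(0,1) (stated via its cdf). -/
def UniformNulls {Ω : Type*} [MeasurableSpace Ω] (μ : Measure Ω)
    {N : ℕ} (P : Ω → Fin N → ℝ) (I0 : Finset (Fin N)) : Prop :=
  ∀ i ∈ I0, ∀ x ∈ Set.Icc (0 : ℝ) 1, μ {ω | P ω i ≤ x} = ENNReal.ofReal x

/-- Assumption 2: the p-values are PRDS on the subset of null p-values. -/
def PRDSNulls {Ω : Type*} [MeasurableSpace Ω] (μ : Measure Ω)
    {N : ℕ} (P : Ω → Fin N → ℝ) (I0 : Finset (Fin N)) : Prop :=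
  ∀ i ∈ I0, ∀ φ : (Fin N → ℝ) → ℝ, Measurable φ → (∃ C, ∀ p, |φ p| ≤ C) →
    (∀ p q : Fin N → ℝ, (∀ j, p j ≤ q j) → φ p ≤ φ q) →
    ∀ x y : ℝ, 0 < x → x ≤ y → y ≤ 1 →
      (∫ ω in {ω | P ω i ≤ x}, φ (P ω) ∂μ) / (μ {ω | P ω i ≤ x}).toReal ≤
        (∫ ω in {ω | P ω i ≤ y}, φ (P ω) ∂μ) / (μ {ω | P ω i ≤ y}).toReal

lemma bhNum_mem (N : ℕ) (α : ℝ) (Q : Fin N → ℝ) :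
    bhNumRejections N α Q ∈ (Finset.range (N + 1)).filter
      (fun j : ℕ => j ≤ (Finset.univ.filter (fun i : Fin N => Q i ≤ (j : ℝ) * α / N)).card) := by
  have hne : ((Finset.range (N + 1)).filter
      (fun j : ℕ => j ≤ (Finset.univ.filter (fun i : Fin N => Q i ≤ (j : ℝ) * α / N)).card)).Nonempty :=
    ⟨0, by simp⟩
  obtain ⟨j, hj, hsup⟩ := Finset.exists_mem_eq_sup _ hne id
  unfold bhNumRejections
  rw [hsup]
  exact hj

lemma le_bhNum {N : ℕ} {α : ℝ} {Q : Fin N → ℝ} {j : ℕ} (hjN : j ≤ N)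
    (h : j ≤ (Finset.univ.filter (fun i : Fin N => Q i ≤ (j : ℝ) * α / N)).card) :
    j ≤ bhNumRejections N α Q :=
  Finset.le_sup (f := id)
    (Finset.mem_filter.mpr ⟨Finset.mem_range.mpr (Nat.lt_succ_of_le hjN), h⟩)

lemma bhNum_le (N : ℕ) (α : ℝ) (Q : Fin N → ℝ) : bhNumRejections N α Q ≤ N := by
  have := Finset.mem_range.mp (Finset.mem_filter.mp (bhNum_mem N α Q)).1
  omega

lemma bhNum_spec (N : ℕ) (α : ℝ) (Q : Fin N → ℝ) :
    bhNumRejections N α Q ≤ (bhRejected N α Q).card :=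
  (Finset.mem_filter.mp (bhNum_mem N α Q)).2

lemma card_bhRejected {N : ℕ} (hN : 0 < N) {α : ℝ} (hα : 0 ≤ α) (Q : Fin N → ℝ) :
    (bhRejected N α Q).card = bhNumRejections N α Q := by
  classical
  refine le_antisymm ?_ (bhNum_spec N α Q)
  have hRc : bhNumRejections N α Q ≤ (bhRejected N α Q).card := bhNum_spec N α Q
  have hcN : (bhRejected N α Q).card ≤ N := by
    refine le_trans (Finset.card_filter_le _ _) ?_
    simp
  refine le_bhNum hcN ?_
  have hsub : bhRejected N α Q ⊆
      Finset.univ.filter (fun i : Fin N => Q i ≤ ((bhRejected N α Q).card : ℝ) * α / N) := by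
    unfold bhRejected
    apply Finset.monotone_filter_right
    intro i _ hi
    refine le_trans hi ?_
    have h1 : (bhNumRejections N α Q : ℝ) ≤ ((bhRejected N α Q).card : ℝ) := by
      exact_mod_cast hRc
    have hN' : (0:ℝ) < N := by exact_mod_cast hN
    gcongr
    exact bhNum_spec N α Q
  exact Finset.card_le_card hsub

lemma bhNum_antitone {N : ℕ} {α : ℝ} {W : Fin N → ℝ} (hW : ∀ i, 0 ≤ W i)
    {p q : Fin N → ℝ} (h : ∀ i, p i ≤ q i) :
    bhNumRejections N α (fun i => W i * q i) ≤ bhNumRejections N α (fun i => W i * p i) := by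
  apply Finset.sup_mono
  intro j hj
  rw [Finset.mem_filter] at hj ⊢
  refine ⟨hj.1, le_trans hj.2 (Finset.card_le_card (Finset.monotone_filter_right _ ?_))⟩
  intro i _ hi
  exact le_trans (mul_le_mul_of_nonneg_left (h i) (hW i)) hi

lemma measurable_card_le {N : ℕ} (W : Fin N → ℝ) (t : ℝ) :
    Measurable (fun p : Fin N → ℝ =>
      (Finset.univ.filter (fun i : Fin N => W i * p i ≤ t)).card) := by
  classical
  have h : (fun p : Fin N → ℝ => (Finset.univ.filter (fun i : Fin N => W i * p i ≤ t)).card)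
      = fun p => ∑ i : Fin N, if W i * p i ≤ t then 1 else 0 := by
    funext p; rw [Finset.card_filter]
  rw [h]
  exact Finset.measurable_sum _ (fun i _ =>
    Measurable.ite (measurableSet_le (f := fun p : Fin N → ℝ => W i * p i) (by fun_prop) measurable_const)
      measurable_const measurable_const)

lemma measurable_bhNum {N : ℕ} (α : ℝ) (W : Fin N → ℝ) :
    Measurable (fun p : Fin N → ℝ => bhNumRejections N α (fun i => W i * p i)) := by
  classical
  have hset : ∀ k : ℕ,
      MeasurableSet {p : Fin N → ℝ | k ≤ bhNumRejections N α (fun i => W i * p i)} := by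
    intro k
    have heq : {p : Fin N → ℝ | k ≤ bhNumRejections N α (fun i => W i * p i)}
        = ⋃ j ∈ Finset.range (N+1), ({p : Fin N → ℝ | k ≤ j} ∩
            {p : Fin N → ℝ |
              j ≤ (Finset.univ.filter (fun i : Fin N => W i * p i ≤ (j:ℝ)*α/N)).card}) := by
      ext p
      simp only [Set.mem_setOf_eq, Set.mem_iUnion, Set.mem_inter_iff, exists_prop]
      constructor
      · intro hk
        refine ⟨bhNumRejections N α (fun i => W i * p i),
          Finset.mem_range.mpr (Nat.lt_succ_of_le (bhNum_le _ _ _)), hk,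
          (Finset.mem_filter.mp (bhNum_mem _ _ _)).2⟩
      · rintro ⟨j, hj, hkj, hcond⟩
        exact le_trans hkj (le_bhNum (Nat.lt_succ_iff.mp (Finset.mem_range.mp hj)) hcond)
    rw [heq]
    refine Set.Finite.measurableSet_biUnion (Finset.finite_toSet _) (fun j _ => ?_)
    refine MeasurableSet.inter ?_ ((measurable_card_le W _) measurableSet_Ici)
    by_cases hkj : k ≤ j
    · simp [hkj]
    · simp [hkj]
  apply measurable_to_countable'
  intro k
  have heq : (fun p : Fin N → ℝ => bhNumRejections N α (fun i => W i * p i)) ⁻¹' {k}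
      = {p : Fin N → ℝ | k ≤ bhNumRejections N α (fun i => W i * p i)} \
        {p : Fin N → ℝ | k + 1 ≤ bhNumRejections N α (fun i => W i * p i)} := by
    ext p
    simp only [Set.mem_preimage, Set.mem_singleton_iff, Set.mem_diff, Set.mem_setOf_eq]
    omega
  rw [heq]
  exact (hset k).diff (hset (k+1))

lemma setIntegral_indicator_one {Ω : Type*} [MeasurableSpace Ω] (μ : Measure Ω)
    [IsFiniteMeasure μ] {s t : Set Ω} (hs : MeasurableSet s) (ht : MeasurableSet t) :
    ∫ ω in s, t.indicator (fun _ => (1:ℝ)) ω ∂μ = (μ (t ∩ s)).toReal := by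
  rw [MeasureTheory.integral_indicator ht]
  rw [MeasureTheory.setIntegral_const, measureReal_def, Measure.restrict_apply ht]
  simp

/-- Theorem 5: FDR control of the oracle Gen-GBH for PRDS p-values with uniform nulls. -/
theorem genGBH_FDR_control
    {Ω : Type*} [MeasurableSpace Ω] (μ : Measure Ω) [IsProbabilityMeasure μ]
    {N S : ℕ} (hS : 0 < S) (hN : 0 < N) (P : Ω → Fin N → ℝ) (hPmeas : Measurable P)
    (hPrange : ∀ ω i, P ω i ∈ Set.Icc (0 : ℝ) 1)
    (I0 : Finset (Fin N))
    (hUnif : UniformNulls μ P I0) (hPRDS : PRDSNulls μ P I0)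
    (Ws : Fin S → Fin N → ℝ) (hpos : ∀ s i, 0 < Ws s i)
    (hcond : ∀ s, ∑ i ∈ I0, 1 / Ws s i = (N : ℝ))
    (W : Fin N → ℝ)
    (hW : ∀ i, 1 / W i = (1 / (S : ℝ)) * ∑ s, 1 / Ws s i)
    (α : ℝ) (hα : α ∈ Set.Ioo (0 : ℝ) 1) :
    FDR μ N α I0 (fun ω i => W i * P ω i) ≤ α := by
  classical
  obtain ⟨hα0, hα1⟩ := hα
  haveI : Nonempty (Fin S) := ⟨⟨0, hS⟩⟩
  have hN' : (0:ℝ) < N := by exact_mod_cast hN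
  have hS' : (0:ℝ) < S := by exact_mod_cast hS
  have hWpos : ∀ i, 0 < W i := by
    intro i
    have h2 : 0 < ∑ s, 1 / Ws s i :=
      Finset.sum_pos (fun s _ => by have := hpos s i; positivity) Finset.univ_nonempty
    have h1 : 0 < 1 / W i := by
      rw [hW i]; positivity
    exact one_div_pos.mp h1
  set Rw : (Fin N → ℝ) → ℕ := fun p => bhNumRejections N α (fun i => W i * p i) with hRwdef
  have hRwMeas : Measurable Rw := measurable_bhNum α W
  have hPi : ∀ i : Fin N, Measurable fun ω => P ω i :=
    fun i => (measurable_pi_apply i).comp hPmeas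
  set c : Fin N → ℝ := fun i => α / (N * W i) with hcdef
  have hcpos : ∀ i, 0 < c i := fun i => div_pos hα0 (mul_pos hN' (hWpos i))
  set x : Fin N → ℕ → ℝ := fun i k => min ((k:ℝ) * c i) 1 with hxdef
  have hx_nonneg : ∀ i k, 0 ≤ x i k :=
    fun i k => le_min (mul_nonneg (Nat.cast_nonneg k) (hcpos i).le) zero_le_one
  have hx_pos : ∀ i k, 1 ≤ k → 0 < x i k := by
    intro i k hk
    have hk' : (0:ℝ) < k := by exact_mod_cast hk
    exact lt_min (mul_pos hk' (hcpos i)) one_pos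
  have hx_le_one : ∀ i k, x i k ≤ 1 := fun i k => min_le_right _ _
  have hx_mono : ∀ i k, x i k ≤ x i (k+1) := by
    intro i k
    refine min_le_min (mul_le_mul_of_nonneg_right ?_ (hcpos i).le) le_rfl
    push_cast; linarith
  set A : Fin N → ℕ → Set Ω := fun i k => {ω | P ω i ≤ x i k} with hAdef
  set B : ℕ → Set Ω := fun k => {ω | k ≤ Rw (P ω)} with hBdef
  set Sset : Fin N → ℕ → Set Ω := fun i k => (B k \ B (k+1)) ∩ A i k with hSdef
  have hAmeas : ∀ i k, MeasurableSet (A i k) := fun i k =>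
    measurableSet_le (hPi i) measurable_const
  have hBmeas : ∀ k, MeasurableSet (B k) := fun k =>
    (hRwMeas.comp hPmeas) (measurableSet_Ici (a := k))
  have hBanti : ∀ k, B (k+1) ⊆ B k := by
    intro k ω hω
    simp only [hBdef, Set.mem_setOf_eq] at hω ⊢
    omega
  have hSmeas : ∀ i k, MeasurableSet (Sset i k) :=
    fun i k => ((hBmeas k).diff (hBmeas (k+1))).inter (hAmeas i k)
  have hμA : ∀ i ∈ I0, ∀ k, (μ (A i k)).toReal = x i k := by
    intro i hi k
    have h := hUnif i hi (x i k) ⟨hx_nonneg i k, hx_le_one i k⟩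
    have hAx : A i k = {ω | P ω i ≤ x i k} := rfl
    rw [hAx, h, ENNReal.toReal_ofReal (hx_nonneg i k)]
  -- pointwise identity for the FDP
  have hFDPeq : ∀ ω, FDP N α I0 (fun i => W i * P ω i)
      = ∑ i ∈ I0, ∑ k ∈ Finset.range N,
          ((k:ℝ)+1)⁻¹ * (Sset i (k+1)).indicator (fun _ => (1:ℝ)) ω := by
    intro ω
    have hRQ : bhNumRejections N α (fun i => W i * P ω i) = Rw (P ω) := rfl
    have hcard : (bhRejected N α (fun i => W i * P ω i)).card = Rw (P ω) := by
      rw [card_bhRejected hN hα0.le]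
    have hind : ∀ i k, (Sset i (k+1)).indicator (fun _ => (1:ℝ)) ω
        = if (Rw (P ω) = k+1 ∧ P ω i ≤ x i (k+1)) then 1 else 0 := by
      intro i k
      have hmem : ω ∈ Sset i (k+1) ↔ (Rw (P ω) = k+1 ∧ P ω i ≤ x i (k+1)) := by
        simp only [hSdef, Set.mem_inter_iff, Set.mem_diff, hBdef, hAdef, Set.mem_setOf_eq]
        constructor
        · rintro ⟨⟨h1, h2⟩, h3⟩; exact ⟨by omega, h3⟩
        · rintro ⟨h1, h3⟩; exact ⟨⟨by omega, by omega⟩, h3⟩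
      rw [Set.indicator_apply]
      by_cases hc1 : ω ∈ Sset i (k+1)
      · rw [if_pos hc1, if_pos (hmem.mp hc1)]
      · rw [if_neg hc1, if_neg (fun hc2 => hc1 (hmem.mpr hc2))]
    rcases Nat.eq_zero_or_pos (Rw (P ω)) with h0 | hpos1
    · have hRejEmpty : bhRejected N α (fun i => W i * P ω i) = ∅ := by
        rw [← Finset.card_eq_zero, hcard, h0]
      unfold FDP
      rw [hRejEmpty]
      simp only [Finset.empty_inter, Finset.card_empty, Nat.cast_zero, zero_div]
      symm
      refine Finset.sum_eq_zero (fun i _ => Finset.sum_eq_zero (fun k _ => ?_))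
      rw [hind i k, if_neg (fun hc => by omega), mul_zero]
    · obtain ⟨r, hr⟩ : ∃ r, Rw (P ω) = r + 1 := ⟨Rw (P ω) - 1, by omega⟩
      have hrN : r + 1 ≤ N := by
        rw [← hr, ← hRQ]; exact bhNum_le N α _
      unfold FDP
      have hmax : max ((bhRejected N α (fun i => W i * P ω i)).card : ℝ) 1 = (r:ℝ)+1 := by
        rw [hcard, hr]
        push_cast
        rw [max_eq_left]
        have : (0:ℝ) ≤ r := Nat.cast_nonneg r
        linarith
      have hnum : ((bhRejected N α (fun i => W i * P ω i) ∩ I0).card : ℝ)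
          = ∑ i ∈ I0, (if i ∈ bhRejected N α (fun i => W i * P ω i) then (1:ℝ) else 0) := by
        have hie : bhRejected N α (fun i => W i * P ω i) ∩ I0
            = I0.filter (fun i => i ∈ bhRejected N α (fun i => W i * P ω i)) := by
          ext j; simp only [Finset.mem_inter, Finset.mem_filter]; tauto
        rw [hie, Finset.card_filter]
        push_cast
        rfl
      rw [hmax, hnum, Finset.sum_div]
      refine Finset.sum_congr rfl (fun i hiI0 => ?_)
      have hiff : i ∈ bhRejected N α (fun i => W i * P ω i) ↔ P ω i ≤ x i (r+1) := by
        simp only [bhRejected, Finset.mem_filter, Finset.mem_univ, true_and]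
        have h1 : (bhNumRejections N α (fun i => W i * P ω i) : ℝ) = (r:ℝ)+1 := by
          rw [hRQ, hr]; push_cast; ring
        rw [h1]
        have h2 : ((r:ℝ)+1) * α / (N:ℝ) / W i = ((r+1:ℕ):ℝ) * c i := by
          rw [hcdef]; push_cast; field_simp
        constructor
        · intro h
          have h3 : P ω i ≤ ((r:ℝ)+1) * α / (N:ℝ) / W i := by
            rw [le_div_iff₀ (hWpos i), mul_comm]
            exact h
          rw [h2] at h3
          exact le_min h3 (hPrange ω i).2
        · intro h
          have h3 : P ω i ≤ ((r:ℝ)+1) * α / (N:ℝ) / W i := by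
            rw [h2]
            exact le_trans h (min_le_left _ _)
          rw [le_div_iff₀ (hWpos i), mul_comm] at h3
          exact h3
      rw [Finset.sum_eq_single r]
      · rw [hind i r]
        by_cases hmem : i ∈ bhRejected N α (fun i => W i * P ω i)
        · rw [if_pos hmem, if_pos ⟨hr, hiff.mp hmem⟩, mul_one, one_div]
        · rw [if_neg hmem, if_neg (fun hc => hmem (hiff.mpr hc.2)), mul_zero, zero_div]
      · intro k _ hkr
        rw [hind i k, if_neg (fun hc => hkr (by omega)), mul_zero]
      · intro hnr
        exact absurd (Finset.mem_range.mpr (by omega)) hnr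
  -- integral computation
  have hSint : ∀ i k, Integrable ((Sset i (k+1)).indicator (fun _ => (1:ℝ))) μ :=
    fun i k => (integrable_const 1).indicator (hSmeas i (k+1))
  have hstep : FDR μ N α I0 (fun ω i => W i * P ω i)
      = ∑ i ∈ I0, ∑ k ∈ Finset.range N, ((k:ℝ)+1)⁻¹ * (μ (Sset i (k+1))).toReal := by
    have hF : FDR μ N α I0 (fun ω i => W i * P ω i)
        = ∫ ω, FDP N α I0 (fun i => W i * P ω i) ∂μ := rfl
    rw [hF]
    rw [integral_congr_ae (Filter.Eventually.of_forall hFDPeq)]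
    rw [integral_finset_sum _ (fun i _ =>
      integrable_finset_sum _ (fun k _ => (hSint i k).const_mul _))]
    refine Finset.sum_congr rfl (fun i _ => ?_)
    rw [integral_finset_sum _ (fun k _ => (hSint i k).const_mul _)]
    refine Finset.sum_congr rfl (fun k _ => ?_)
    rw [integral_const_mul, integral_indicator_const (1:ℝ) (hSmeas i (k+1)), smul_eq_mul, mul_one, measureReal_def]
  -- per-null-index bound
  have hkey : ∀ i ∈ I0, ∑ k ∈ Finset.range N, ((k:ℝ)+1)⁻¹ * (μ (Sset i (k+1))).toReal
      ≤ α / N * (1 / W i) := by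
    intro i hi
    set D : ℕ → ℝ := fun k => (μ (B k ∩ A i k)).toReal / x i k with hDdef
    have hXpos : ∀ k : ℕ, 0 < x i (k+1) := fun k => hx_pos i (k+1) (by omega)
    have hterm : ∀ k ∈ Finset.range N,
        ((k:ℝ)+1)⁻¹ * (μ (Sset i (k+1))).toReal ≤ c i * (D (k+1) - D (k+2)) := by
      intro k _
      -- split the measure of Sset
      have hsub : B (k+2) ∩ A i (k+1) ⊆ B (k+1) ∩ A i (k+1) :=
        Set.inter_subset_inter_left _ (hBanti (k+1))
      have hseteq : Sset i (k+1) = (B (k+1) ∩ A i (k+1)) \ (B (k+2) ∩ A i (k+1)) := by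
        rw [hSdef]
        ext ω
        simp only [Set.mem_inter_iff, Set.mem_diff]
        tauto
      have hsplit : (μ (Sset i (k+1))).toReal
          = (μ (B (k+1) ∩ A i (k+1))).toReal - (μ (B (k+2) ∩ A i (k+1))).toReal := by
        rw [hseteq, measure_diff hsub ((hBmeas (k+2)).inter (hAmeas i (k+1))).nullMeasurableSet
          (measure_ne_top μ _),
          ENNReal.toReal_sub_of_le (measure_mono hsub) (measure_ne_top μ _)]
      -- PRDS step : D (k+2) ≤ μ(B(k+2) ∩ A i (k+1)) / x i (k+1)
      have hPRDSstep : D (k+2) ≤ (μ (B (k+2) ∩ A i (k+1))).toReal / x i (k+1) := by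
        have hφmeas : Measurable (fun p : Fin N → ℝ =>
            -(if k+2 ≤ bhNumRejections N α (fun j => W j * p j) then (1:ℝ) else 0)) := by
          apply Measurable.neg
          exact Measurable.ite ((measurable_bhNum α W) (measurableSet_Ici (a := k+2)))
            measurable_const measurable_const
        have hφbdd : ∃ C, ∀ p : Fin N → ℝ,
            |(-(if k+2 ≤ bhNumRejections N α (fun j => W j * p j) then (1:ℝ) else 0))| ≤ C := by
          refine ⟨1, fun p => ?_⟩
          rw [abs_neg]
          split <;> simp
        have hφmono : ∀ p q : Fin N → ℝ, (∀ j, p j ≤ q j) →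
            (-(if k+2 ≤ bhNumRejections N α (fun j => W j * p j) then (1:ℝ) else 0)) ≤
            (-(if k+2 ≤ bhNumRejections N α (fun j => W j * q j) then (1:ℝ) else 0)) := by
          intro p q hpq
          apply neg_le_neg
          have hle := bhNum_antitone (α := α) (W := W) (fun j => (hWpos j).le) hpq
          by_cases h2 : k+2 ≤ bhNumRejections N α (fun j => W j * q j)
          · rw [if_pos h2, if_pos (le_trans h2 hle)]
          · rw [if_neg h2]
            split <;> norm_num
        have h := hPRDS i hi
          (fun p => -(if k+2 ≤ bhNumRejections N α (fun j => W j * p j) then (1:ℝ) else 0))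
          hφmeas hφbdd hφmono (x i (k+1)) (x i (k+2)) (hXpos k) (hx_mono i (k+1))
          (hx_le_one i (k+2))
        -- rewrite both set integrals
        have hint : ∀ m : ℕ,
            (∫ ω in {ω | P ω i ≤ x i m},
              (-(if k+2 ≤ bhNumRejections N α (fun j => W j * P ω j) then (1:ℝ) else 0)) ∂μ)
              = -(μ (B (k+2) ∩ A i m)).toReal := by
          intro m
          have hfun : (fun ω => (-(if k+2 ≤ bhNumRejections N α (fun j => W j * P ω j)
              then (1:ℝ) else 0)))
              = fun ω => -((B (k+2)).indicator (fun _ => (1:ℝ)) ω) := by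
            funext ω
            have hmem : (k+2 ≤ bhNumRejections N α (fun j => W j * P ω j)) ↔ ω ∈ B (k+2) := by
              simp only [hBdef, Set.mem_setOf_eq, hRwdef]
            by_cases hm : ω ∈ B (k+2)
            · rw [Set.indicator_of_mem hm, if_pos (hmem.mpr hm)]
            · rw [Set.indicator_of_notMem hm, if_neg (fun hcc => hm (hmem.mp hcc)), neg_zero]
          have hseq : {ω | P ω i ≤ x i m} = A i m := rfl
          rw [hfun, hseq, integral_neg, setIntegral_indicator_one μ (hAmeas i m) (hBmeas (k+2))]
        have hA1 : (μ {ω | P ω i ≤ x i (k+1)}).toReal = x i (k+1) := hμA i hi (k+1)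
        have hA2 : (μ {ω | P ω i ≤ x i (k+2)}).toReal = x i (k+2) := hμA i hi (k+2)
        rw [hint (k+1), hint (k+2), hA1, hA2, neg_div, neg_div, neg_le_neg_iff] at h
        exact h
      -- combine
      rw [hsplit]
      have hb_le : (μ (B (k+2) ∩ A i (k+1))).toReal ≤ (μ (B (k+1) ∩ A i (k+1))).toReal :=
        ENNReal.toReal_mono (measure_ne_top μ _) (measure_mono hsub)
      have h1 : ((k:ℝ)+1)⁻¹ *
          ((μ (B (k+1) ∩ A i (k+1))).toReal - (μ (B (k+2) ∩ A i (k+1))).toReal)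
          = (((k:ℝ)+1)⁻¹ * x i (k+1)) *
            (D (k+1) - (μ (B (k+2) ∩ A i (k+1))).toReal / x i (k+1)) := by
        rw [hDdef]
        have hxne : x i (k+1) ≠ 0 := (hXpos k).ne'
        field_simp
      rw [h1]
      have hk1 : (0:ℝ) < (k:ℝ)+1 := by positivity
      have hfac1 : ((k:ℝ)+1)⁻¹ * x i (k+1) ≤ c i := by
        rw [inv_mul_le_iff₀ hk1]
        calc x i (k+1) ≤ ((k+1:ℕ):ℝ) * c i := min_le_left _ _
          _ = ((k:ℝ)+1) * c i := by push_cast; ring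
      have hfac2 : 0 ≤ D (k+1) - (μ (B (k+2) ∩ A i (k+1))).toReal / x i (k+1) := by
        rw [hDdef, sub_nonneg]
        exact (div_le_div_iff_of_pos_right (hXpos k)).mpr hb_le
      calc (((k:ℝ)+1)⁻¹ * x i (k+1)) *
            (D (k+1) - (μ (B (k+2) ∩ A i (k+1))).toReal / x i (k+1))
          ≤ c i * (D (k+1) - (μ (B (k+2) ∩ A i (k+1))).toReal / x i (k+1)) :=
            mul_le_mul_of_nonneg_right hfac1 hfac2
        _ ≤ c i * (D (k+1) - D (k+2)) :=
            mul_le_mul_of_nonneg_left (by linarith [hPRDSstep]) (hcpos i).le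
    have hD1 : D 1 ≤ 1 := by
      rw [hDdef, div_le_one (hXpos 0)]
      rw [← hμA i hi 1]
      exact ENNReal.toReal_mono (measure_ne_top μ _) (measure_mono Set.inter_subset_right)
    have hDN : 0 ≤ D (N+1) :=
      div_nonneg ENNReal.toReal_nonneg (hx_pos i (N+1) (by omega)).le
    calc ∑ k ∈ Finset.range N, ((k:ℝ)+1)⁻¹ * (μ (Sset i (k+1))).toReal
        ≤ ∑ k ∈ Finset.range N, c i * (D (k+1) - D (k+2)) := Finset.sum_le_sum hterm
      _ = c i * (D 1 - D (N+1)) := by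
          rw [← Finset.mul_sum, Finset.sum_range_sub' (f := fun n => D (n+1))]
      _ ≤ c i * 1 := mul_le_mul_of_nonneg_left (by linarith) (hcpos i).le
      _ = α / N * (1 / W i) := by
          rw [mul_one, hcdef, mul_one_div, div_div]
  -- assemble
  rw [hstep]
  have hsum : ∑ i ∈ I0, (1:ℝ) / W i = (N:ℝ) := by
    calc ∑ i ∈ I0, (1:ℝ) / W i = ∑ i ∈ I0, (1/(S:ℝ)) * ∑ s, 1 / Ws s i :=
          Finset.sum_congr rfl (fun i _ => hW i)
      _ = (1/(S:ℝ)) * ∑ i ∈ I0, ∑ s, 1 / Ws s i := by rw [Finset.mul_sum]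
      _ = (1/(S:ℝ)) * ∑ s, ∑ i ∈ I0, 1 / Ws s i := by rw [Finset.sum_comm]
      _ = (1/(S:ℝ)) * ∑ _s : Fin S, (N:ℝ) := by
          rw [Finset.sum_congr rfl (fun s _ => hcond s)]
      _ = (N:ℝ) := by
          rw [Finset.sum_const, Finset.card_univ, Fintype.card_fin, nsmul_eq_mul]
          field_simp
  calc ∑ i ∈ I0, ∑ k ∈ Finset.range N, ((k:ℝ)+1)⁻¹ * (μ (Sset i (k+1))).toReal
      ≤ ∑ i ∈ I0, α / N * (1 / W i) := Finset.sum_le_sum hkey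
    _ = α := by
        rw [← Finset.mul_sum, hsum]
        field_simp
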